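/- arXiv:2009.09286 — 2 statements merged into one kernel-verified Lean document; each statement's English description precedes it below -/
import Mathlib

section
/- Inversion of the basic inequality (Lemma 11 of the paper): suppose (i) D† + (A₂−B₁)·λ₂·‖b‖₁ ≤ [ (M₀₁·s_γ·λ₀²)^{1/2} + M₁₁^{1/2}·(s_γ·λ₀² + s_α·λ₁²)^{1/2} ]·Q^{1/2} + 2·A₂·λ₂·Σ_{j∈S}|b_j|; (ii) D† ≥ C·( (1 − exp(−c·‖b‖₁)) / (c·‖b‖₁) )·Q, with the ratio interpreted as 1 when b = 0; (iii) if Σ_{j∉S}|b_j| ≤ μ₂·Σ_{j∈S}|b_j| then ν₂₁²·(Σ_{j∈S}|b_j|)² ≤ s₁₁·Q; (iv) ϱ₅ := c·(A₂−B₁)^{−1}·μ₂₂²·ν₂₁^{−2}·C^{−1}·s₁₁·λ₂ < 1 and ϱ₆ := c·(A₂−B₁)^{−1}·μ₂₁^{−2}·C^{−1}·( 2·(M₀₁+M₁₁)·s_γ·λ₀² + 2·M₁₁·s_α·λ₁² )/λ₂ < 1. Then D† + (A₂−B₁)·λ₂·‖b‖₁ ≤ C^{−1}·[ 2·μ₂₁^{−2}·(M₀₁+M₁₁)·s_γ·λ₀²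 + 2·μ₂₁^{−2}·M₁₁·s_α·λ₁² + μ₂₂²·ν₂₁^{−2}·s₁₁·λ₂² ]. -/
/-!
Write `θ = (A₂ - B₁) λ₂` and `T = ‖b‖₁`. The core step: if `D + θ T ≤ a √Q`,
`D ≥ C ((1 - e^{-cT}) / (cT)) Q` and `c a² ≤ 2 C θ`, then `C √Q ≤ a`, whence `D + θ T ≤ a² / C`.
Otherwise, with `y = cT` and `v = C √Q > a`, the two bounds combine to
`(1 - e^{-y}) v² + a² y² / 2 ≤ a v y`, which fails for every `y > 0`
(use `e^{-y} ≤ 1 - y + y²/2` for `y ≤ 1` and `e^{-y} < 1/2` for `y > 1`).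

The term `2 A₂ λ₂ ∑_{j∈S} |b_j| = (1 - μ₂₁) μ₂₂ λ₂ ∑_{j∈S} |b_j|` is removed by the cone split.
Inside the cone, the compatibility condition bounds it by a multiple of `√Q`, which is absorbed
into `a` by convexity of the square. Outside the cone, it is at most `(1 - μ₂₁) θ T` and
is absorbed into the left side, so `θ` shrinks to `μ₂₁ θ`. In each case the smallness conditions
`ϱ₅, ϱ₆ < 1` give `c a² ≤ 2 C θ`.
-/

open Finset Real

lemma exp_neg_le_one_sub_add_sq_div_two {y : ℝ} (hy : 0 ≤ y) : exp (-y) ≤ 1 - y + y ^ 2 / 2 := by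
  have hpos : 0 < 1 - y + y ^ 2 / 2 := by nlinarith [sq_nonneg (y - 1)]
  -- `(1 - y + y²/2) (1 + y + y²/2) = 1 + y⁴/4`
  have hprod : 1 ≤ (1 - y + y ^ 2 / 2) * exp y := by
    nlinarith [mul_le_mul_of_nonneg_left (quadratic_le_exp_of_nonneg hy) hpos.le, pow_nonneg hy 4]
  rw [exp_neg, inv_le_iff_one_le_mul₀ (exp_pos y)]
  linarith

lemma mul_mul_lt_one_sub_exp_neg_mul_sq_add {a v y : ℝ} (hy : 0 < y) (ha : 0 ≤ a) (hav : a < v) :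
    a * v * y < (1 - exp (-y)) * v ^ 2 + a ^ 2 * y ^ 2 / 2 := by
  rcases le_or_gt y 1 with hy1 | hy1
  · have hexp := exp_neg_le_one_sub_add_sq_div_two hy.le
    have hgap : 0 < y * (v - a) ^ 2 / 2 := by have := sub_pos.2 hav; positivity
    have hrest : 0 ≤ y * (1 - y) * (v ^ 2 - a ^ 2) / 2 :=
      div_nonneg (mul_nonneg (mul_nonneg hy.le (by linarith)) (by nlinarith)) zero_le_two
    nlinarith [mul_le_mul_of_nonneg_left hexp (sq_nonneg v)]
  · have hhalf : exp (-y) < 1 / 2 :=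
      (exp_lt_exp.2 (neg_lt_neg hy1)).trans exp_neg_one_lt_half
    have hv : 0 < v := ha.trans_lt hav
    nlinarith [sq_nonneg (v - a * y), mul_lt_mul_of_pos_left hhalf (pow_pos hv 2)]

section BasicInequality

variable {C c θ a D T Q : ℝ}

lemma mul_sqrt_le_of_basic_inequality (hC : 0 < C) (hc : 0 < c) (hT : 0 ≤ T) (hQ : 0 ≤ Q)
    (ha : 0 ≤ a) (h1 : D + θ * T ≤ a * √Q)
    (h2 : C * (if T = 0 then 1 else (1 - exp (-(c * T))) / (c * T)) * Q ≤ D)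
    (h3 : c * a ^ 2 ≤ 2 * C * θ) : C * √Q ≤ a := by
  by_contra! hlt
  have hx : 0 < √Q := pos_of_mul_pos_right (ha.trans_lt hlt) hC.le
  rw [← sq_sqrt hQ] at h2
  rcases hT.eq_or_lt with rfl | hTpos
  · rw [if_pos rfl] at h2
    nlinarith [mul_lt_mul_of_pos_right hlt hx]
  · have hy : 0 < c * T := mul_pos hc hTpos
    rw [if_neg hTpos.ne', mul_div_assoc', div_mul_eq_mul_div, div_le_iff₀ hy] at h2
    have hθ : c * T * (a ^ 2 * (c * T)) ≤ c * T * (2 * C * θ * T) := by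
      have := mul_le_mul_of_nonneg_right h3 (mul_nonneg hy.le hTpos.le)
      nlinarith
    have hgap := mul_mul_lt_one_sub_exp_neg_mul_sq_add hy ha hlt
    nlinarith [mul_le_mul_of_nonneg_left h1 (mul_nonneg hC.le hy.le)]

lemma le_sq_div_of_basic_inequality (hC : 0 < C) (hc : 0 < c) (hT : 0 ≤ T) (hQ : 0 ≤ Q)
    (ha : 0 ≤ a) (h1 : D + θ * T ≤ a * √Q)
    (h2 : C * (if T = 0 then 1 else (1 - exp (-(c * T))) / (c * T)) * Q ≤ D)
    (h3 : c * a ^ 2 ≤ 2 * C * θ) : D + θ * T ≤ a ^ 2 / C := by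
  have hsqrt := mul_sqrt_le_of_basic_inequality hC hc hT hQ ha h1 h2 h3
  calc D + θ * T ≤ a * √Q := h1
    _ = a * (C * √Q) / C := by field_simp
    _ ≤ a * a / C := by gcongr
    _ = a ^ 2 / C := by ring

variable {μ κ ν s Ts E : ℝ}

lemma le_of_basic_inequality_of_compatible (hC : 0 < C) (hc : 0 < c) (hT : 0 ≤ T) (hQ : 0 ≤ Q)
    (ha : 0 ≤ a) (hμ : 0 < μ) (hμ1 : μ ≤ 1) (hκ : 0 ≤ κ) (hν : 0 < ν) (hs : 0 ≤ s)
    (h1 : D + θ * T ≤ a * √Q + (1 - μ) * κ * Ts)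
    (h2 : C * (if T = 0 then 1 else (1 - exp (-(c * T))) / (c * T)) * Q ≤ D)
    (hcompat : ν ^ 2 * Ts ^ 2 ≤ s * Q) (haE : a ^ 2 ≤ E) (hE : c * E ≤ C * θ * μ ^ 2)
    (hF : c * (κ ^ 2 * s / ν ^ 2) ≤ C * θ) :
    D + θ * T ≤ (E / μ ^ 2 + κ ^ 2 * s / ν ^ 2) / C := by
  set m := κ * √s / ν with hm_def
  have hm : 0 ≤ m := by positivity
  have hm_sq : m ^ 2 = κ ^ 2 * s / ν ^ 2 := by rw [hm_def, div_pow, mul_pow, sq_sqrt hs]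
  have hTs : κ * Ts ≤ m * √Q := by
    have hνTs : ν * Ts ≤ √s * √Q := by
      rw [← sqrt_mul hs]
      exact (le_abs_self _).trans (abs_le_sqrt (by linarith))
    rw [hm_def, div_mul_eq_mul_div, le_div_iff₀ hν]
    nlinarith
  set M := a + (1 - μ) * m
  have h1M : D + θ * T ≤ M * √Q := by
    nlinarith [mul_le_mul_of_nonneg_left hTs (sub_nonneg.2 hμ1)]
  -- convexity of the square: `(μ (a/μ) + (1-μ) m)² ≤ μ (a/μ)² + (1-μ) m²`
  have hM_sq : μ ^ 2 * M ^ 2 ≤ E + μ ^ 2 * m ^ 2 := by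
    have hconv : 0 ≤ μ * (1 - μ) * (a - μ * m) ^ 2 := by
      have := sub_nonneg.2 hμ1; positivity
    nlinarith [mul_le_mul_of_nonneg_left haE (sub_nonneg.2 hμ1), pow_nonneg hμ.le 3,
      mul_nonneg (pow_nonneg hμ.le 3) (sq_nonneg m)]
  have h3 : c * M ^ 2 ≤ 2 * C * θ := by
    refine le_of_mul_le_mul_left ?_ (pow_pos hμ 2)
    rw [← hm_sq] at hF
    nlinarith [mul_le_mul_of_nonneg_left hM_sq hc.le, mul_le_mul_of_nonneg_left hF (sq_nonneg μ)]
  calc D + θ * T ≤ M ^ 2 / C :=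
        le_sq_div_of_basic_inequality hC hc hT hQ (by positivity) h1M h2 h3
    _ ≤ (E / μ ^ 2 + m ^ 2) / C := by
        gcongr
        rw [div_add' _ _ _ (pow_pos hμ 2).ne', le_div_iff₀ (pow_pos hμ 2)]
        linarith
    _ = (E / μ ^ 2 + κ ^ 2 * s / ν ^ 2) / C := by rw [hm_sq]

lemma le_of_basic_inequality_of_not_compatible (hC : 0 < C) (hc : 0 < c) (hT : 0 ≤ T)
    (hQ : 0 ≤ Q) (hD : 0 ≤ D) (ha : 0 ≤ a) (hμ : 0 < μ) (hμ1 : μ ≤ 1) {F : ℝ} (hF : 0 ≤ F)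
    (h1 : D + θ * T ≤ a * √Q + (1 - μ) * κ * Ts) (hcone : κ * Ts ≤ θ * T)
    (h2 : C * (if T = 0 then 1 else (1 - exp (-(c * T))) / (c * T)) * Q ≤ D)
    (haE : a ^ 2 ≤ E) (hE : c * E ≤ C * θ * μ ^ 2) :
    D + θ * T ≤ (E / μ ^ 2 + F) / C := by
  have hθ : 0 ≤ θ := by
    have : 0 ≤ C * θ * μ ^ 2 := hE.trans' (mul_nonneg hc.le ((sq_nonneg a).trans haE))
    exact nonneg_of_mul_nonneg_right (nonneg_of_mul_nonneg_left this (pow_pos hμ 2)) hC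
  have h1μ : D + μ * θ * T ≤ a * √Q := by
    nlinarith [mul_le_mul_of_nonneg_left hcone (sub_nonneg.2 hμ1)]
  have h3 : c * a ^ 2 ≤ 2 * C * (μ * θ) := by
    nlinarith [mul_le_mul_of_nonneg_left haE hc.le,
      mul_le_mul_of_nonneg_left hμ1 (mul_nonneg (mul_nonneg hC.le hθ) hμ.le)]
  have hμD : μ * (D + θ * T) ≤ a ^ 2 / C := by
    have := le_sq_div_of_basic_inequality hC hc hT hQ ha h1μ h2 h3
    nlinarith [mul_le_mul_of_nonneg_left hμ1 hD]
  have hX : 0 ≤ D + θ * T := by positivity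
  rw [le_div_iff₀ hC, div_add' _ _ _ (pow_pos hμ 2).ne', le_div_iff₀ (pow_pos hμ 2)]
  rw [le_div_iff₀ hC] at hμD
  nlinarith [mul_le_mul_of_nonneg_right hμ1 (mul_nonneg (mul_nonneg hX hC.le) hμ.le),
    mul_nonneg hF (sq_nonneg μ)]

end BasicInequality

section Mu21

variable {μ A B : ℝ}

lemma sub_pos_of_mul_div_lt (hμ : 1 < μ) (hB : 0 ≤ B) (hA : B * (μ + 1) / (μ - 1) < A) :
    0 < A - B := by
  rw [div_lt_iff₀ (by linarith)] at hA
  nlinarith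

lemma one_sub_two_mul_div_pos (hμ : 1 < μ) (hB : 0 ≤ B) (hA : B * (μ + 1) / (μ - 1) < A) :
    0 < 1 - 2 * A / ((μ + 1) * (A - B)) := by
  have hAB := sub_pos_of_mul_div_lt hμ hB hA
  rw [div_lt_iff₀ (by linarith)] at hA
  rw [sub_pos, div_lt_one (by positivity)]
  linarith

lemma one_sub_two_mul_div_le_one (hμ : 1 < μ) (hB : 0 ≤ B) (hA : B * (μ + 1) / (μ - 1) < A) :
    1 - 2 * A / ((μ + 1) * (A - B)) ≤ 1 := by
  have hAB := sub_pos_of_mul_div_lt hμ hB hA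
  have : 0 ≤ 2 * A / ((μ + 1) * (A - B)) := div_nonneg (by linarith) (by nlinarith)
  linarith

lemma one_sub_one_sub_two_mul_div_mul (hμ : 1 < μ) (hB : 0 ≤ B)
    (hA : B * (μ + 1) / (μ - 1) < A) :
    (1 - (1 - 2 * A / ((μ + 1) * (A - B)))) * ((μ + 1) * (A - B)) = 2 * A := by
  have hAB := sub_pos_of_mul_div_lt hμ hB hA
  field_simp [hAB.ne', (show 0 < μ + 1 by linarith).ne']
  ring

end Mu21

lemma sq_sqrt_add_sqrt_mul_sqrt_le {p q r : ℝ} (hp : 0 ≤ p) (hq : 0 ≤ q) (hr : 0 ≤ r) :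
    (√p + √q * √r) ^ 2 ≤ 2 * (p + q * r) := by
  calc (√p + √q * √r) ^ 2 ≤ 2 * (√p ^ 2 + (√q * √r) ^ 2) := add_sq_le
    _ = 2 * (p + q * r) := by rw [mul_pow, sq_sqrt hp, sq_sqrt hq, sq_sqrt hr]

theorem stmt_17_general (q2 : ℕ)
    (b : Fin (q2 + 1) → ℝ)
    (S : Finset (Fin (q2 + 1)))
    (s11 : ℝ) (hs11 : s11 = (S.card : ℝ))
    (Q Ddag : ℝ) (hQ : 0 ≤ Q) (hDdag : 0 ≤ Ddag)
    (lam0 lam1 lam2 sγ sα M01 M11 C c ν21 μ2 B1 A2 : ℝ)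
    (hlam2 : 0 < lam2)
    (hsγ : 1 ≤ sγ) (hsα : 1 ≤ sα)
    (hM01 : 0 ≤ M01) (hM11 : 0 ≤ M11)
    (hC : 0 < C) (hc : 0 < c) (hν21 : 0 < ν21)
    (hμ2 : 1 < μ2) (hB1 : 0 ≤ B1)
    (hA2 : B1 * (μ2 + 1) / (μ2 - 1) < A2)
    (μ21 μ22 : ℝ)
    (hμ21 : μ21 = 1 - 2 * A2 / ((μ2 + 1) * (A2 - B1)))
    (hμ22 : μ22 = (μ2 + 1) * (A2 - B1))
    -- (i) the basic inequality
    (hi : Ddag + (A2 - B1) * lam2 * (∑ j, |b j|) ≤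
      (Real.sqrt (M01 * sγ * lam0 ^ 2)
          + Real.sqrt M11 * Real.sqrt (sγ * lam0 ^ 2 + sα * lam1 ^ 2)) * Real.sqrt Q
        + 2 * A2 * lam2 * ∑ j ∈ S, |b j|)
    -- (ii) the local quadratic lower bound
    (hii : C * (if (∑ j, |b j|) = 0 then 1
        else (1 - Real.exp (-(c * ∑ j, |b j|))) / (c * ∑ j, |b j|)) * Q ≤ Ddag)
    -- (iii) the empirical compatibility condition
    (hiii : (∑ j ∈ Sᶜ, |b j|) ≤ μ2 * ∑ j ∈ S, |b j| →
      ν21 ^ 2 * (∑ j ∈ S, |b j|) ^ 2 ≤ s11 * Q)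
    -- (iv) smallness conditions
    (hϱ5 : c * (A2 - B1)⁻¹ * μ22 ^ 2 * (ν21 ^ 2)⁻¹ * C⁻¹ * s11 * lam2 < 1)
    (hϱ6 : c * (A2 - B1)⁻¹ * (μ21 ^ 2)⁻¹ * C⁻¹
        * (2 * (M01 + M11) * sγ * lam0 ^ 2 + 2 * M11 * sα * lam1 ^ 2) / lam2 < 1) :
    Ddag + (A2 - B1) * lam2 * (∑ j, |b j|) ≤
      C⁻¹ * (2 * (μ21 ^ 2)⁻¹ * (M01 + M11) * sγ * lam0 ^ 2
        + 2 * (μ21 ^ 2)⁻¹ * M11 * sα * lam1 ^ 2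
        + μ22 ^ 2 * (ν21 ^ 2)⁻¹ * s11 * lam2 ^ 2) := by
  have hAB := sub_pos_of_mul_div_lt hμ2 hB1 hA2
  have hμ21_pos : 0 < μ21 := hμ21 ▸ one_sub_two_mul_div_pos hμ2 hB1 hA2
  have hμ21_le : μ21 ≤ 1 := hμ21 ▸ one_sub_two_mul_div_le_one hμ2 hB1 hA2
  have h2A2 : 2 * A2 = (1 - μ21) * μ22 :=
    hμ21 ▸ hμ22 ▸ (one_sub_one_sub_two_mul_div_mul hμ2 hB1 hA2).symm
  have hμ22_pos : 0 < μ22 := hμ22 ▸ mul_pos (by linarith) hAB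
  have hs11_nonneg : 0 ≤ s11 := hs11 ▸ Nat.cast_nonneg _
  set T := ∑ j, |b j|
  set Ts := ∑ j ∈ S, |b j|
  set a := √(M01 * sγ * lam0 ^ 2) + √M11 * √(sγ * lam0 ^ 2 + sα * lam1 ^ 2)
  set E := 2 * (M01 + M11) * sγ * lam0 ^ 2 + 2 * M11 * sα * lam1 ^ 2
  have haE : a ^ 2 ≤ E :=
    (sq_sqrt_add_sqrt_mul_sqrt_le (by positivity) hM11 (by positivity)).trans_eq (by ring)
  have hE : c * E ≤ C * ((A2 - B1) * lam2) * μ21 ^ 2 := by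
    rw [← div_le_one (by positivity)]
    convert hϱ6.le using 1
    field_simp
  have hF : c * ((μ22 * lam2) ^ 2 * s11 / ν21 ^ 2) ≤ C * ((A2 - B1) * lam2) := by
    rw [← div_le_one (by positivity)]
    convert hϱ5.le using 1
    field_simp
  have hbasic : Ddag + (A2 - B1) * lam2 * T ≤ a * √Q + (1 - μ21) * (μ22 * lam2) * Ts := by
    linear_combination hi + lam2 * Ts * h2A2
  rw [show C⁻¹ * (2 * (μ21 ^ 2)⁻¹ * (M01 + M11) * sγ * lam0 ^ 2
        + 2 * (μ21 ^ 2)⁻¹ * M11 * sα * lam1 ^ 2 + μ22 ^ 2 * (ν21 ^ 2)⁻¹ * s11 * lam2 ^ 2)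
      = (E / μ21 ^ 2 + (μ22 * lam2) ^ 2 * s11 / ν21 ^ 2) / C by ring]
  by_cases hcone : ∑ j ∈ Sᶜ, |b j| ≤ μ2 * Ts
  · exact le_of_basic_inequality_of_compatible hC hc (by positivity) hQ (by positivity)
      hμ21_pos hμ21_le (by positivity) hν21 hs11_nonneg hbasic hii (hiii hcone) haE hE hF
  · have hsplit : Ts + ∑ j ∈ Sᶜ, |b j| = T := sum_add_sum_compl S _
    have hTs : (μ2 + 1) * Ts ≤ T := by linarith [not_le.1 hcone]
    refine le_of_basic_inequality_of_not_compatible hC hc (by positivity) hQ hDdag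
      (by positivity) hμ21_pos hμ21_le (by positivity) hbasic ?_ hii haE hE
    rw [hμ22]
    nlinarith [mul_le_mul_of_nonneg_left hTs (mul_pos hAB hlam2).le]

/-- Inversion of the basic inequality (Lemma 11 of the paper). -/
theorem stmt_17 (q2 : ℕ) (hq2 : 1 ≤ q2)
    (b : Fin (q2 + 1) → ℝ)
    (S : Finset (Fin (q2 + 1))) (hcard : 1 ≤ S.card)
    (s11 : ℝ) (hs11 : s11 = (S.card : ℝ))
    (Q Ddag : ℝ) (hQ : 0 ≤ Q) (hDdag : 0 ≤ Ddag)
    (lam0 lam1 lam2 sγ sα M01 M11 C c ν21 μ2 B1 A2 : ℝ)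
    (hlam0 : 0 < lam0) (hlam1 : 0 < lam1) (hlam2 : 0 < lam2)
    (hsγ : 1 ≤ sγ) (hsα : 1 ≤ sα)
    (hM01 : 0 ≤ M01) (hM11 : 0 ≤ M11)
    (hC : 0 < C) (hc : 0 < c) (hν21 : 0 < ν21)
    (hμ2 : 1 < μ2) (hB1 : 0 ≤ B1)
    (hA2 : B1 * (μ2 + 1) / (μ2 - 1) < A2)
    (μ21 μ22 : ℝ)
    (hμ21 : μ21 = 1 - 2 * A2 / ((μ2 + 1) * (A2 - B1)))
    (hμ22 : μ22 = (μ2 + 1) * (A2 - B1))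
    -- (i) the basic inequality
    (hi : Ddag + (A2 - B1) * lam2 * (∑ j, |b j|) ≤
      (Real.sqrt (M01 * sγ * lam0 ^ 2)
          + Real.sqrt M11 * Real.sqrt (sγ * lam0 ^ 2 + sα * lam1 ^ 2)) * Real.sqrt Q
        + 2 * A2 * lam2 * ∑ j ∈ S, |b j|)
    -- (ii) the local quadratic lower bound
    (hii : C * (if (∑ j, |b j|) = 0 then 1
        else (1 - Real.exp (-(c * ∑ j, |b j|))) / (c * ∑ j, |b j|)) * Q ≤ Ddag)
    -- (iii) the empirical compatibility condition
    (hiii : (∑ j ∈ Sᶜ, |b j|) ≤ μ2 * ∑ j ∈ S, |b j| →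
      ν21 ^ 2 * (∑ j ∈ S, |b j|) ^ 2 ≤ s11 * Q)
    -- (iv) smallness conditions
    (hϱ5 : c * (A2 - B1)⁻¹ * μ22 ^ 2 * (ν21 ^ 2)⁻¹ * C⁻¹ * s11 * lam2 < 1)
    (hϱ6 : c * (A2 - B1)⁻¹ * (μ21 ^ 2)⁻¹ * C⁻¹
        * (2 * (M01 + M11) * sγ * lam0 ^ 2 + 2 * M11 * sα * lam1 ^ 2) / lam2 < 1) :
    Ddag + (A2 - B1) * lam2 * (∑ j, |b j|) ≤
      C⁻¹ * (2 * (μ21 ^ 2)⁻¹ * (M01 + M11) * sγ * lam0 ^ 2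
        + 2 * (μ21 ^ 2)⁻¹ * M11 * sα * lam1 ^ 2
        + μ22 ^ 2 * (ν21 ^ 2)⁻¹ * s11 * lam2 ^ 2) :=
  stmt_17_general q2 b S s11 hs11 Q Ddag hQ hDdag lam0 lam1 lam2 sγ sα M01 M11 C c ν21 μ2 B1 A2
    hlam2 hsγ hsα hM01 hM11 hC hc hν21 hμ2 hB1 hA2 μ21 μ22 hμ21 hμ22 hi hii hiii hϱ5 hϱ6
end

section
/- Deterministic form of the augmented IPW expansion bound (Lemma 12 of the paper, underlying Theorem 3): for any constants C_{f0} ≥ 1, C_{f1} ∈ ℝ, C_{g0} ≥ 1, C_{g1} > 0, C_{g2} > 0, C_{h0} ≥ 1, C_{h1} > 0, C_{h2} > 0, σ ≥ 0, B₁ ≥ 0, B_{f1} ≥ 0, B_{f3} ≥ 0, M₀, M₁, M₂ > 0, ϱ₀, ϱ₁, ϱ₂ > 0, there exist positive constants M₃₀, M₃₁, M₃₂ depending only on these constants and on ψ_D′(0), ψ_Y′(0), C̃_{h1} := max(|ψ_Y(−C_{h1})|, |ψ_Y(C_{h1})|), such that the following holds. Assume: (a) ‖γ̂−γ̄‖₁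 ≤ M₀·s_γ·λ₀ and (γ̂−γ̄)ᵀΣ̃_f(γ̂−γ̄) ≤ M₀·s_γ·λ₀²; (b) ‖α̂₁−ᾱ₁‖₁ ≤ r₁ and Ẽ[ Z·w(γ̄)·((α̂₁−ᾱ₁)ᵀg)² ] ≤ M₁·(s_γ·λ₀² + s_α·λ₁²); (c) ‖α̂₁₁−ᾱ₁₁‖₁ ≤ r₂ and Ẽ[ Z·w(γ̄)·((α̂₁₁−ᾱ₁₁)ᵀh)² ] ≤ M₂·(s_γ·λ₀² + s_α·λ₁² + s₁₁·λ₂²); (d) max_{0 ≤ j ≤ q₂} | Ẽ[ Z·w(γ̄)·(D·Y − m̄₁·m̄₁₁)·h_j ] | ≤ B₁·λ₂; (e) there exist symmetric matrices Σ_f, Σ_{f3} with max_{j,k}|(Σ̃_f)_{jk} − (Σ_f)_{jk}| ≤ B_{f1}·λ₀, max_{j,k}|(Ẽ[ Z·w(γ̄)·|D·Y − m̄₁·m̄₁₁|·f·fᵀ ])_{jk} − (Σ_{f3})_{jk}| ≤ B_{f3}·λ₀, and bᵀΣ_{f3}b ≤ σ·bᵀΣ_f b for all b ∈ ℝ^{1+p};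 (f) sup over α₁ with ‖α₁−ᾱ₁‖₁ ≤ r₁ of | Ẽ[ (1 − Z/π̄)·m̄₁₁·(ψ_D(α₁ᵀg) − ψ_D(ᾱ₁ᵀg)) ] | ≤ 4·(exp(−C_{f1})+1)·C_{g0}·C̃_{h1}·ψ_D′(0)·exp(C_{g2}·(C_{g1}+C_{g0}·r₁))·r₁·λ₁; (g) sup over all α₁ ∈ ℝ^{1+q₁} and all α₁₁ with ‖α₁₁−ᾱ₁₁‖₁ ≤ r₂ of | Ẽ[ (1 − Z/π̄)·ψ_D(α₁ᵀg)·(ψ_Y(α₁₁ᵀh) − ψ_Y(ᾱ₁₁ᵀh)) ] | ≤ 4·(exp(−C_{f1})+1)·C_{h0}·ψ_Y′(0)·exp(C_{h2}·(C_{h1}+C_{h0}·r₂))·r₂·λ₂. Then | Ẽ[φ̂] − Ẽ[φ̄] | ≤ M₃₀·s_γ·λ₀·λ₂ + M₃₁·s_α·λ₁·λ₂ + M₃₂·s₁₁·λ₂². -/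
open Finset

lemma aux_abs_exp_sub_one (x : ℝ) : |Real.exp x - 1| ≤ |x| * Real.exp |x| := by
  rcases le_or_gt 0 x with hx | hx
  · rw [abs_of_nonneg hx, abs_of_nonneg (by linarith [Real.one_le_exp hx])]
    have h1 : (-x) + 1 ≤ Real.exp (-x) := Real.add_one_le_exp (-x)
    have h2 : Real.exp x * ((-x) + 1) ≤ 1 := by
      have := mul_le_mul_of_nonneg_left h1 (Real.exp_pos x).le
      rwa [← Real.exp_add, add_neg_cancel, Real.exp_zero] at this
    nlinarith [Real.exp_pos x]
  · rw [abs_of_neg hx, abs_of_nonpos (by linarith [Real.exp_le_one_iff.mpr hx.le])]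
    have h1 : x + 1 ≤ Real.exp x := Real.add_one_le_exp x
    have h4 : (1:ℝ) ≤ Real.exp (-x) := Real.one_le_exp (by linarith)
    nlinarith

lemma aux_abs_exp_taylor (x : ℝ) : |Real.exp x - 1 - x| ≤ x ^ 2 * Real.exp |x| := by
  have hcont : Continuous fun t : ℝ => Real.exp t - 1 := by continuity
  have key : ∫ t in (0:ℝ)..x, (Real.exp t - 1) = Real.exp x - 1 - x := by
    have : ∀ t : ℝ, HasDerivAt (fun s => Real.exp s - s) (Real.exp t - 1) t := fun t =>
      (Real.hasDerivAt_exp t).sub (hasDerivAt_id t)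
    rw [intervalIntegral.integral_eq_sub_of_hasDerivAt (fun t _ => this t)
      (hcont.intervalIntegrable 0 x)]
    simp; ring
  rw [← key]
  have hb : ∀ t ∈ Set.uIoc (0:ℝ) x, ‖Real.exp t - 1‖ ≤ |x| * Real.exp |x| := by
    intro t ht
    have htx : |t| ≤ |x| := by
      rcases Set.mem_uIoc.mp ht with h | h
      · rw [abs_of_pos h.1, abs_of_nonneg (le_trans h.1.le h.2)]; exact h.2
      · rw [abs_of_nonpos h.2, abs_of_nonpos (h.1.trans_le h.2).le]
        linarith [h.1.le]
    calc ‖Real.exp t - 1‖ ≤ |t| * Real.exp |t| := aux_abs_exp_sub_one t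
      _ ≤ |x| * Real.exp |x| :=
        mul_le_mul htx (Real.exp_le_exp.mpr htx) (Real.exp_pos _).le (abs_nonneg x)
  calc ‖∫ t in (0:ℝ)..x, (Real.exp t - 1)‖ ≤ |x| * Real.exp |x| * |x - 0| :=
    intervalIntegral.norm_integral_le_of_norm_le_const hb
    _ = x ^ 2 * Real.exp |x| := by rw [sub_zero]; ring_nf; rw [sq_abs]; ring

lemma aux_lip (φ φ' : ℝ → ℝ) (hd : ∀ x, HasDerivAt φ (φ' x) x)
    (M L a b : ℝ) (hL : ∀ x, |x| ≤ M → ‖φ' x‖ ≤ L)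
    (ha : |a| ≤ M) (hb : |b| ≤ M) : |φ a - φ b| ≤ L * |a - b| := by
  have hs : Convex ℝ (Set.Icc (-M) M) := convex_Icc _ _
  have := hs.norm_image_sub_le_of_norm_hasDerivWithin_le
    (f := φ) (f' := φ') (C := L)
    (fun z _ => (hd z).hasDerivWithinAt)
    (fun z hz => hL z (abs_le.mpr ⟨hz.1, hz.2⟩))
    (Set.mem_Icc.mpr (abs_le.mp hb)) (Set.mem_Icc.mpr (abs_le.mp ha))
  simpa [Real.norm_eq_abs] using this

lemma aux_abs_le_max {a x b : ℝ} (h1 : a ≤ x) (h2 : x ≤ b) : |x| ≤ max |a| |b| :=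
  abs_le.mpr ⟨by have := neg_abs_le a; have := le_max_left |a| |b|; linarith,
    le_trans h2 ((le_abs_self b).trans (le_max_right _ _))⟩

lemma aux_swap (n m : ℕ) (c : Fin n → ℝ) (δ : Fin m → ℝ) (f : Fin n → Fin m → ℝ) (N : ℝ) :
    N * ∑ i, c i * (∑ j, δ j * f i j) = ∑ j, δ j * (N * ∑ i, c i * f i j) := by
  simp only [Finset.mul_sum]
  rw [Finset.sum_comm]
  apply Finset.sum_congr rfl
  intro i _
  apply Finset.sum_congr rfl
  intro j _
  ring

lemma aux_quad (n m : ℕ) (w : Fin n → ℝ) (δ : Fin m → ℝ) (f : Fin n → Fin m → ℝ) (N : ℝ) :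
    N * ∑ i, w i * (∑ j, δ j * f i j) ^ 2
      = ∑ j, ∑ k, δ j * (N * ∑ i, w i * f i j * f i k) * δ k := by
  have h1 : ∀ i, w i * (∑ j, δ j * f i j) ^ 2
      = ∑ j, ∑ k, δ j * (w i * f i j * f i k) * δ k := by
    intro i
    rw [sq, Finset.sum_mul_sum]
    rw [Finset.mul_sum]
    apply Finset.sum_congr rfl
    intro j _
    rw [Finset.mul_sum]
    apply Finset.sum_congr rfl
    intro k _
    ring
  simp only [h1, Finset.mul_sum]
  rw [Finset.sum_comm]
  apply Finset.sum_congr rfl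
  intro j _
  rw [Finset.sum_comm]
  apply Finset.sum_congr rfl
  intro k _
  rw [Finset.sum_mul]
  apply Finset.sum_congr rfl
  intro i _
  ring

-- bilinear difference bound: |δᵀ(A−B)δ| ≤ c * (∑|δ|)²
lemma aux_bilin (m : ℕ) (A B : Fin m → Fin m → ℝ) (δ : Fin m → ℝ) (c : ℝ)
    (h : ∀ j k, |A j k - B j k| ≤ c) :
    |∑ j, ∑ k, δ j * A j k * δ k - ∑ j, ∑ k, δ j * B j k * δ k|
      ≤ c * (∑ j, |δ j|) ^ 2 := by
  rw [← Finset.sum_sub_distrib]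
  calc |∑ j, (∑ k, δ j * A j k * δ k - ∑ k, δ j * B j k * δ k)|
      ≤ ∑ j, |∑ k, δ j * A j k * δ k - ∑ k, δ j * B j k * δ k| :=
        Finset.abs_sum_le_sum_abs _ _
    _ ≤ ∑ j, |δ j| * (c * ∑ k, |δ k|) := by
        apply Finset.sum_le_sum
        intro j _
        rw [← Finset.sum_sub_distrib]
        calc |∑ k, (δ j * A j k * δ k - δ j * B j k * δ k)|
            ≤ ∑ k, |δ j * A j k * δ k - δ j * B j k * δ k| := Finset.abs_sum_le_sum_abs _ _
          _ ≤ ∑ k, |δ j| * c * |δ k| := by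
              apply Finset.sum_le_sum
              intro k _
              have : δ j * A j k * δ k - δ j * B j k * δ k = δ j * (A j k - B j k) * δ k := by
                ring
              rw [this, abs_mul, abs_mul]
              apply mul_le_mul_of_nonneg_right _ (abs_nonneg _)
              exact mul_le_mul_of_nonneg_left (h j k) (abs_nonneg _)
          _ = |δ j| * (c * ∑ k, |δ k|) := by
              rw [Finset.mul_sum, Finset.mul_sum]
              apply Finset.sum_congr rfl
              intro k _
              ring
    _ = c * (∑ j, |δ j|) ^ 2 := by rw [← Finset.sum_mul]; ring

lemma aux_lin_bound {n m : ℕ} (δ : Fin m → ℝ) (f : Fin n → Fin m → ℝ) (C r : ℝ)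
    (hC : 0 ≤ C) (hfb : ∀ i j, |f i j| ≤ C) (hδ : ∑ j, |δ j| ≤ r) (i : Fin n) :
    |∑ j, δ j * f i j| ≤ C * r := by
  calc |∑ j, δ j * f i j| ≤ ∑ j, |δ j * f i j| := Finset.abs_sum_le_sum_abs _ _
    _ ≤ ∑ j, |δ j| * C := Finset.sum_le_sum fun j _ => by
        rw [abs_mul]; exact mul_le_mul_of_nonneg_left (hfb i j) (abs_nonneg _)
    _ = (∑ j, |δ j|) * C := (Finset.sum_mul _ _ _).symm
    _ ≤ r * C := mul_le_mul_of_nonneg_right hδ hC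
    _ = C * r := mul_comm _ _

lemma aux_abs_add5 (a b c d e : ℝ) : |a+b+c+d+e| ≤ |a|+|b|+|c|+|d|+|e| := by
  linarith [abs_add_le (a+b+c+d) e, abs_add_le (a+b+c) d, abs_add_le (a+b) c, abs_add_le a b]


set_option maxHeartbeats 2000000 in
/-- Deterministic form of the augmented IPW expansion bound
(Lemma 12 of the paper, underlying Theorem 3). -/
theorem stmt_19
    (Cf0 Cf1 Cg0 Cg1 Cg2 Ch0 Ch1 Ch2 σ B1 Bf1 Bf3 M0 M1 M2 ϱ0 ϱ1 ϱ2 : ℝ)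
    (hCf0 : 1 ≤ Cf0) (hCg0 : 1 ≤ Cg0) (hCg1 : 0 < Cg1) (hCg2 : 0 < Cg2)
    (hCh0 : 1 ≤ Ch0) (hCh1 : 0 < Ch1) (hCh2 : 0 < Ch2)
    (hσ : 0 ≤ σ) (hB1 : 0 ≤ B1) (hBf1 : 0 ≤ Bf1) (hBf3 : 0 ≤ Bf3)
    (hM0 : 0 < M0) (hM1 : 0 < M1) (hM2 : 0 < M2)
    (hϱ0 : 0 < ϱ0) (hϱ1 : 0 < ϱ1) (hϱ2 : 0 < ϱ2)
    (dD0 dY0 tCh1 : ℝ) :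
    ∃ M30 M31 M32 : ℝ, 0 < M30 ∧ 0 < M31 ∧ 0 < M32 ∧
    ∀ (n p q1 q2 : ℕ) (hn : 1 ≤ n)
      (Z D Y : Fin n → ℝ)
      (fV : Fin n → Fin (p + 1) → ℝ)
      (gV : Fin n → Fin (q1 + 1) → ℝ)
      (hV : Fin n → Fin (q2 + 1) → ℝ)
      (hZbin : ∀ i, Z i = 0 ∨ Z i = 1)
      -- f is a subvector of h
      (ι : Fin (p + 1) → Fin (q2 + 1)) (hι : Function.Injective ι)
      (hsub : ∀ i j, fV i j = hV i (ι j))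
      -- link functions
      (ψD ψD' ψY ψY' : ℝ → ℝ)
      (hψDd : ∀ x, HasDerivAt ψD (ψD' x) x) (hψYd : ∀ x, HasDerivAt ψY (ψY' x) x)
      (hψD'nn : ∀ x, 0 ≤ ψD' x) (hψY'nn : ∀ x, 0 ≤ ψY' x)
      (hψDrange : ∀ x, 0 ≤ ψD x ∧ ψD x ≤ 1)
      (hψDlim : Filter.Tendsto ψD Filter.atBot (nhds 0))
      (hψDratio : ∀ u v : ℝ, ψD' u ≤ ψD' v * Real.exp (Cg2 * |u - v|))
      (hψYratio : ∀ u v : ℝ, ψY' u ≤ ψY' v * Real.exp (Ch2 * |u - v|))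
      (hdD0 : ψD' 0 = dD0) (hdY0 : ψY' 0 = dY0)
      (htCh1 : max |ψY (-Ch1)| |ψY Ch1| = tCh1)
      -- coefficient vectors
      (γhat γbar : Fin (p + 1) → ℝ)
      (α1hat α1bar : Fin (q1 + 1) → ℝ)
      (α11hat α11bar : Fin (q2 + 1) → ℝ)
      -- derived quantities
      (πhat πbar what wbar m1hat m1bar m11hat m11bar φhat φbar : Fin n → ℝ)
      (hπhat : ∀ i, πhat i = 1 / (1 + Real.exp (-(∑ j, γhat j * fV i j))))
      (hπbar : ∀ i, πbar i = 1 / (1 + Real.exp (-(∑ j, γbar j * fV i j))))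
      (hwhat : ∀ i, what i = Real.exp (-(∑ j, γhat j * fV i j)))
      (hwbar : ∀ i, wbar i = Real.exp (-(∑ j, γbar j * fV i j)))
      (hm1hat : ∀ i, m1hat i = ψD (∑ j, α1hat j * gV i j))
      (hm1bar : ∀ i, m1bar i = ψD (∑ j, α1bar j * gV i j))
      (hm11hat : ∀ i, m11hat i = ψY (∑ j, α11hat j * hV i j))
      (hm11bar : ∀ i, m11bar i = ψY (∑ j, α11bar j * hV i j))
      (hφhat : ∀ i, φhat i = (Z i / πhat i) * (D i * Y i)
          - (Z i / πhat i - 1) * (m1hat i * m11hat i))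
      (hφbar : ∀ i, φbar i = (Z i / πbar i) * (D i * Y i)
          - (Z i / πbar i - 1) * (m1bar i * m11bar i))
      (SigTf : Fin (p + 1) → Fin (p + 1) → ℝ)
      (hSigTf : ∀ j k, SigTf j k = (1 / (n : ℝ)) * ∑ i, Z i * wbar i * fV i j * fV i k)
      (SigTf3 : Fin (p + 1) → Fin (p + 1) → ℝ)
      (hSigTf3 : ∀ j k, SigTf3 j k = (1 / (n : ℝ)) * ∑ i,
          Z i * wbar i * |D i * Y i - m1bar i * m11bar i| * fV i j * fV i k)
      -- boundedness
      (hfb : ∀ i j, |fV i j| ≤ Cf0)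
      (hflb : ∀ i, Cf1 ≤ ∑ j, γbar j * fV i j)
      (hgb : ∀ i j, |gV i j| ≤ Cg0)
      (hglb : ∀ i, |∑ j, α1bar j * gV i j| ≤ Cg1)
      (hhb : ∀ i j, |hV i j| ≤ Ch0)
      (hhlb : ∀ i, |∑ j, α11bar j * hV i j| ≤ Ch1)
      -- tuning values and sparsity sizes
      (lam0 lam1 lam2 sγ sα s11 r1 r2 : ℝ)
      (hlam0 : 0 < lam0) (hlam01 : lam0 ≤ lam1) (hlam12 : lam1 ≤ lam2)
      (hsγ : 1 ≤ sγ) (hsα : 1 ≤ sα) (hs11 : 1 ≤ s11)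
      (hrate0 : sγ * lam0 ≤ ϱ0) (hrate1 : sγ * lam0 + sα * lam1 ≤ ϱ1)
      (hrate2 : s11 * lam2 ≤ ϱ2)
      (hr1 : r1 = M1 * (sγ * lam0 + sα * lam1))
      (hr2 : r2 = M2 * (sγ * lam0 + sα * lam1 + s11 * lam2))
      -- (a)
      (haL1 : ∑ j, |γhat j - γbar j| ≤ M0 * sγ * lam0)
      (haquad : ∑ j, ∑ k, (γhat j - γbar j) * SigTf j k * (γhat k - γbar k)
          ≤ M0 * sγ * lam0 ^ 2)
      -- (b)
      (hbL1 : ∑ j, |α1hat j - α1bar j| ≤ r1)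
      (hbquad : (1 / (n : ℝ)) * ∑ i, Z i * wbar i
            * (∑ j, (α1hat j - α1bar j) * gV i j) ^ 2
          ≤ M1 * (sγ * lam0 ^ 2 + sα * lam1 ^ 2))
      -- (c)
      (hcL1 : ∑ j, |α11hat j - α11bar j| ≤ r2)
      (hcquad : (1 / (n : ℝ)) * ∑ i, Z i * wbar i
            * (∑ j, (α11hat j - α11bar j) * hV i j) ^ 2
          ≤ M2 * (sγ * lam0 ^ 2 + sα * lam1 ^ 2 + s11 * lam2 ^ 2))
      -- (d)
      (hd : ∀ j, |(1 / (n : ℝ)) * ∑ i,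
          Z i * wbar i * (D i * Y i - m1bar i * m11bar i) * hV i j| ≤ B1 * lam2)
      -- (e)
      (Sigf Sigf3 : Fin (p + 1) → Fin (p + 1) → ℝ)
      (hSigfSymm : ∀ j k, Sigf j k = Sigf k j)
      (hSigf3Symm : ∀ j k, Sigf3 j k = Sigf3 k j)
      (heclose1 : ∀ j k, |SigTf j k - Sigf j k| ≤ Bf1 * lam0)
      (heclose3 : ∀ j k, |SigTf3 j k - Sigf3 j k| ≤ Bf3 * lam0)
      (hedom : ∀ b : Fin (p + 1) → ℝ,
          ∑ j, ∑ k, b j * Sigf3 j k * b k ≤ σ * ∑ j, ∑ k, b j * Sigf j k * b k)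
      -- (f)
      (hf : ∀ α1 : Fin (q1 + 1) → ℝ, (∑ j, |α1 j - α1bar j|) ≤ r1 →
          |(1 / (n : ℝ)) * ∑ i, (1 - Z i / πbar i) * m11bar i
              * (ψD (∑ j, α1 j * gV i j) - ψD (∑ j, α1bar j * gV i j))|
            ≤ 4 * (Real.exp (-Cf1) + 1) * Cg0 * tCh1 * dD0
                * Real.exp (Cg2 * (Cg1 + Cg0 * r1)) * r1 * lam1)
      -- (g)
      (hg : ∀ (α1 : Fin (q1 + 1) → ℝ) (α11 : Fin (q2 + 1) → ℝ),
          (∑ j, |α11 j - α11bar j|) ≤ r2 →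
          |(1 / (n : ℝ)) * ∑ i, (1 - Z i / πbar i) * ψD (∑ j, α1 j * gV i j)
              * (ψY (∑ j, α11 j * hV i j) - ψY (∑ j, α11bar j * hV i j))|
            ≤ 4 * (Real.exp (-Cf1) + 1) * Ch0 * dY0
                * Real.exp (Ch2 * (Ch1 + Ch0 * r2)) * r2 * lam2),
      |(1 / (n : ℝ)) * ∑ i, φhat i - (1 / (n : ℝ)) * ∑ i, φbar i| ≤
        M30 * sγ * lam0 * lam2 + M31 * sα * lam1 * lam2 + M32 * s11 * lam2 ^ 2 := by
  have hCg0' : (0:ℝ) < Cg0 := lt_of_lt_of_le one_pos hCg0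
  have hCh0' : (0:ℝ) < Ch0 := lt_of_lt_of_le one_pos hCh0
  have hCf0' : (0:ℝ) < Cf0 := lt_of_lt_of_le one_pos hCf0
  set EE := Real.exp (Cf0 * (M0 * ϱ0)) with hEEdef
  set cD := |dD0| * Real.exp (Cg2 * (Cg1 + Cg0 * (M1 * ϱ1))) with hcDdef
  set cY := |dY0| * Real.exp (Ch2 * (Ch1 + Ch0 * (M2 * (ϱ1 + ϱ2)))) with hcYdef
  set Kf := 4 * (Real.exp (-Cf1) + 1) * Cg0 * |tCh1| * cD with hKfdef
  set Kg := 4 * (Real.exp (-Cf1) + 1) * Ch0 * cY with hKgdef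
  have hEEpos : 0 < EE := Real.exp_pos _
  have hcDnn : 0 ≤ cD := mul_nonneg (abs_nonneg _) (Real.exp_pos _).le
  have hcYnn : 0 ≤ cY := mul_nonneg (abs_nonneg _) (Real.exp_pos _).le
  have hbase : (0:ℝ) ≤ 4 * (Real.exp (-Cf1) + 1) :=
    by positivity
  have hKfnn : 0 ≤ Kf :=
    mul_nonneg (mul_nonneg (mul_nonneg hbase hCg0'.le) (abs_nonneg _)) hcDnn
  have hKgnn : 0 ≤ Kg := mul_nonneg (mul_nonneg hbase hCh0'.le) hcYnn
  set A2c := EE * (σ * M0 + (σ * Bf1 + Bf3) * M0 ^ 2 * ϱ0) with hA2cdef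
  set A3c := EE * (|tCh1| * cD * (M0 + M1) + cY * (M0 + M2)) / 2 with hA3cdef
  set B3c := EE * (|tCh1| * cD * M1 + cY * M2) / 2 with hB3cdef
  set C3c := EE * cY * M2 / 2 with hC3cdef
  have hA2cnn : 0 ≤ A2c := by
    apply mul_nonneg hEEpos.le
    have h1 : 0 ≤ σ * M0 := mul_nonneg hσ hM0.le
    have h2 : 0 ≤ (σ * Bf1 + Bf3) * M0 ^ 2 * ϱ0 :=
      mul_nonneg (mul_nonneg (add_nonneg (mul_nonneg hσ hBf1) hBf3) (sq_nonneg _)) hϱ0.le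
    linarith
  have hA3cnn : 0 ≤ A3c := by
    apply div_nonneg _ two_pos.le
    apply mul_nonneg hEEpos.le
    have h1 : 0 ≤ |tCh1| * cD * (M0 + M1) :=
      mul_nonneg (mul_nonneg (abs_nonneg _) hcDnn) (by linarith)
    have h2 : 0 ≤ cY * (M0 + M2) := mul_nonneg hcYnn (by linarith)
    linarith
  have hB3cnn : 0 ≤ B3c := by
    apply div_nonneg _ two_pos.le
    apply mul_nonneg hEEpos.le
    have h1 : 0 ≤ |tCh1| * cD * M1 :=
      mul_nonneg (mul_nonneg (abs_nonneg _) hcDnn) hM1.le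
    have h2 : 0 ≤ cY * M2 := mul_nonneg hcYnn hM2.le
    linarith
  have hC3cnn : 0 ≤ C3c := by
    apply div_nonneg _ two_pos.le
    exact mul_nonneg (mul_nonneg hEEpos.le hcYnn) hM2.le
  have hKfM1 : 0 ≤ Kf * M1 := mul_nonneg hKfnn hM1.le
  have hKgM2 : 0 ≤ Kg * M2 := mul_nonneg hKgnn hM2.le
  have hB1M0 : 0 ≤ B1 * M0 := mul_nonneg hB1 hM0.le
  refine ⟨B1 * M0 + A2c + A3c + Kf * M1 + Kg * M2 + 1,
    B3c + Kf * M1 + Kg * M2 + 1, C3c + Kg * M2 + 1,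
    by linarith, by linarith, by linarith, ?_⟩
  intro n p q1 q2 hn Z D Y fV gV hV hZbin ι hι hsub ψD ψD' ψY ψY' hψDd hψYd hψD'nn
    hψY'nn hψDrange hψDlim hψDratio hψYratio hdD0 hdY0 htCh1 γhat γbar α1hat α1bar
    α11hat α11bar πhat πbar what wbar m1hat m1bar m11hat m11bar φhat φbar hπhat hπbar
    hwhat hwbar hm1hat hm1bar hm11hat hm11bar hφhat hφbar SigTf hSigTf SigTf3 hSigTf3
    hfb hflb hgb hglb hhb hhlb lam0 lam1 lam2 sγ sα s11 r1 r2 hlam0 hlam01 hlam12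
    hsγ hsα hs11 hrate0 hrate1 hrate2 hr1 hr2 haL1 haquad hbL1 hbquad hcL1 hcquad hd
    Sigf Sigf3 hSigfSymm hSigf3Symm heclose1 heclose3 hedom hf hg
  -- basic positivity facts
  have hn0 : (0:ℝ) < (n:ℝ) := by exact_mod_cast hn
  have hNinn : (0:ℝ) ≤ 1 / (n:ℝ) := by positivity
  have hl1 : 0 < lam1 := hlam0.trans_le hlam01
  have hl2 : 0 < lam2 := hl1.trans_le hlam12
  have hsγ0 : (0:ℝ) < sγ := lt_of_lt_of_le one_pos hsγ
  have hsα0 : (0:ℝ) < sα := lt_of_lt_of_le one_pos hsα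
  have hs110 : (0:ℝ) < s11 := lt_of_lt_of_le one_pos hs11
  have hP : (0:ℝ) < sγ * lam0 * lam2 := by positivity
  have hQ : (0:ℝ) < sα * lam1 * lam2 := by positivity
  have hRr : (0:ℝ) < s11 * lam2 ^ 2 := by positivity
  have hdD0nn : 0 ≤ dD0 := hdD0 ▸ hψD'nn 0
  have hdY0nn : 0 ≤ dY0 := hdY0 ▸ hψY'nn 0
  have htCnn : 0 ≤ tCh1 := htCh1 ▸ le_trans (abs_nonneg _) (le_max_left _ _)
  have hr1pos : 0 < r1 := by
    rw [hr1]; exact mul_pos hM1 (add_pos (mul_pos hsγ0 hlam0) (mul_pos hsα0 hl1))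
  have hr2pos : 0 < r2 := by
    rw [hr2]; exact mul_pos hM2 (add_pos (add_pos (mul_pos hsγ0 hlam0) (mul_pos hsα0 hl1)) (mul_pos hs110 hl2))
  have hr1le : r1 ≤ M1 * ϱ1 := by
    rw [hr1]; exact mul_le_mul_of_nonneg_left hrate1 hM1.le
  have hr2le : r2 ≤ M2 * (ϱ1 + ϱ2) := by
    rw [hr2]; exact mul_le_mul_of_nonneg_left (by linarith) hM2.le
  have hZw : ∀ i, 0 ≤ Z i * wbar i := by
    intro i
    rcases hZbin i with h | h
    · rw [h]; simp
    · rw [h, hwbar i, one_mul]; exact (Real.exp_pos _).le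
  -- the short-hand concrete constants
  set cD' := dD0 * Real.exp (Cg2 * (Cg1 + Cg0 * r1)) with hcD'def
  set cY' := dY0 * Real.exp (Ch2 * (Ch1 + Ch0 * r2)) with hcY'def
  have hcD'nn : 0 ≤ cD' := mul_nonneg hdD0nn (Real.exp_pos _).le
  have hcY'nn : 0 ≤ cY' := mul_nonneg hdY0nn (Real.exp_pos _).le
  have hcD'le : cD' ≤ cD := by
    rw [hcD'def, hcDdef]
    refine mul_le_mul (le_abs_self dD0) ?_ (Real.exp_pos _).le (abs_nonneg _)
    apply Real.exp_le_exp.mpr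
    apply mul_le_mul_of_nonneg_left _ hCg2.le
    have := mul_le_mul_of_nonneg_left hr1le hCg0'.le
    linarith
  have hcY'le : cY' ≤ cY := by
    rw [hcY'def, hcYdef]
    refine mul_le_mul (le_abs_self dY0) ?_ (Real.exp_pos _).le (abs_nonneg _)
    apply Real.exp_le_exp.mpr
    apply mul_le_mul_of_nonneg_left _ hCh2.le
    have := mul_le_mul_of_nonneg_left hr2le hCh0'.le
    linarith
  -- bounds on linear forms
  have hγr : ∑ j, |γhat j - γbar j| ≤ M0 * ϱ0 := by
    refine haL1.trans ?_
    rw [mul_assoc]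
    exact mul_le_mul_of_nonneg_left hrate0 hM0.le
  have hub : ∀ i, |∑ j, (γhat j - γbar j) * fV i j| ≤ Cf0 * (M0 * ϱ0) :=
    aux_lin_bound _ fV Cf0 (M0 * ϱ0) hCf0'.le hfb hγr
  have hvb : ∀ i, |∑ j, (α1hat j - α1bar j) * gV i j| ≤ Cg0 * r1 :=
    aux_lin_bound _ gV Cg0 r1 hCg0'.le hgb hbL1
  have hwvb : ∀ i, |∑ j, (α11hat j - α11bar j) * hV i j| ≤ Ch0 * r2 :=
    aux_lin_bound _ hV Ch0 r2 hCh0'.le hhb hcL1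
  -- structural identities
  have hwe : ∀ i, what i = wbar i * Real.exp (-(∑ j, (γhat j - γbar j) * fV i j)) := by
    intro i
    rw [hwhat i, hwbar i, ← Real.exp_add]
    congr 1
    have h2 : ∑ j, (γhat j - γbar j) * fV i j
        = (∑ j, γhat j * fV i j) - ∑ j, γbar j * fV i j := by
      rw [← Finset.sum_sub_distrib]
      exact Finset.sum_congr rfl fun j _ => by ring
    rw [h2]; ring
  have hZph : ∀ i, Z i / πhat i = Z i * (1 + what i) := by
    intro i
    rcases hZbin i with h | h
    · rw [h]; simp
    · rw [h, hπhat i, one_div_one_div, hwhat i, one_mul]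
  have hZpb : ∀ i, Z i / πbar i = Z i * (1 + wbar i) := by
    intro i
    rcases hZbin i with h | h
    · rw [h]; simp
    · rw [h, hπbar i, one_div_one_div, hwbar i, one_mul]
  have hpt : ∀ i, φhat i - φbar i =
      Z i * wbar i * (-(∑ j, (γhat j - γbar j) * fV i j))
        * (D i * Y i - m1bar i * m11bar i)
      + Z i * wbar i * (Real.exp (-(∑ j, (γhat j - γbar j) * fV i j)) - 1
          - (-(∑ j, (γhat j - γbar j) * fV i j)))
        * (D i * Y i - m1bar i * m11bar i)
      + (-(Z i * wbar i * (Real.exp (-(∑ j, (γhat j - γbar j) * fV i j)) - 1)))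
        * (m1hat i * m11hat i - m1bar i * m11bar i)
      + (1 - Z i / πbar i) * m11bar i * (m1hat i - m1bar i)
      + (1 - Z i / πbar i) * m1hat i * (m11hat i - m11bar i) := by
    intro i
    rw [hφhat i, hφbar i, hZph i, hZpb i, hwe i]
    ring
  have hsplit : (1 / (n:ℝ)) * ∑ i, φhat i - (1 / (n:ℝ)) * ∑ i, φbar i
      = (1 / (n:ℝ)) * ∑ i, Z i * wbar i * (-(∑ j, (γhat j - γbar j) * fV i j))
          * (D i * Y i - m1bar i * m11bar i)
      + (1 / (n:ℝ)) * ∑ i, Z i * wbar i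
          * (Real.exp (-(∑ j, (γhat j - γbar j) * fV i j)) - 1
            - (-(∑ j, (γhat j - γbar j) * fV i j)))
          * (D i * Y i - m1bar i * m11bar i)
      + (1 / (n:ℝ)) * ∑ i,
          (-(Z i * wbar i * (Real.exp (-(∑ j, (γhat j - γbar j) * fV i j)) - 1)))
          * (m1hat i * m11hat i - m1bar i * m11bar i)
      + (1 / (n:ℝ)) * ∑ i, (1 - Z i / πbar i) * m11bar i * (m1hat i - m1bar i)
      + (1 / (n:ℝ)) * ∑ i, (1 - Z i / πbar i) * m1hat i * (m11hat i - m11bar i) := by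
    rw [← mul_sub, ← Finset.sum_sub_distrib]
    rw [Finset.sum_congr rfl fun i _ => hpt i]
    simp only [Finset.sum_add_distrib]
    ring
  -- quadratic form identities
  have hQuadU : (1 / (n:ℝ)) * ∑ i, (Z i * wbar i) * (∑ j, (γhat j - γbar j) * fV i j) ^ 2
      = ∑ j, ∑ k, (γhat j - γbar j) * SigTf j k * (γhat k - γbar k) := by
    rw [aux_quad n (p+1) (fun i => Z i * wbar i) (fun j => γhat j - γbar j) fV (1/(n:ℝ))]
    apply Finset.sum_congr rfl; intro j _
    apply Finset.sum_congr rfl; intro k _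
    rw [hSigTf j k]
  have hQuad3 : (1 / (n:ℝ)) * ∑ i, (Z i * wbar i * |D i * Y i - m1bar i * m11bar i|)
        * (∑ j, (γhat j - γbar j) * fV i j) ^ 2
      = ∑ j, ∑ k, (γhat j - γbar j) * SigTf3 j k * (γhat k - γbar k) := by
    rw [aux_quad n (p+1) (fun i => Z i * wbar i * |D i * Y i - m1bar i * m11bar i|)
      (fun j => γhat j - γbar j) fV (1/(n:ℝ))]
    apply Finset.sum_congr rfl; intro j _
    apply Finset.sum_congr rfl; intro k _
    rw [hSigTf3 j k]
  -- matrix chain bound for the Σ̃_f3 quadratic form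
  have hQ3bound : ∑ j, ∑ k, (γhat j - γbar j) * SigTf3 j k * (γhat k - γbar k)
      ≤ (σ * M0 + (σ * Bf1 + Bf3) * M0 ^ 2 * ϱ0) * (sγ * lam0 ^ 2) := by
    have habs3 := abs_le.mp (aux_bilin (p+1) SigTf3 Sigf3
      (fun j => γhat j - γbar j) (Bf3 * lam0) heclose3)
    have habs1 := abs_le.mp (aux_bilin (p+1) SigTf Sigf
      (fun j => γhat j - γbar j) (Bf1 * lam0) heclose1)
    have hdom := hedom (fun j => γhat j - γbar j)
    have hLnn : (0:ℝ) ≤ ∑ j, |γhat j - γbar j| :=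
      Finset.sum_nonneg fun j _ => abs_nonneg _
    have hL1sq : (∑ j, |γhat j - γbar j|) ^ 2 ≤ (M0 * sγ * lam0) ^ 2 :=
      pow_le_pow_left₀ hLnn haL1 2
    have s1 : ∑ j, ∑ k, (γhat j - γbar j) * SigTf3 j k * (γhat k - γbar k)
        ≤ σ * (∑ j, ∑ k, (γhat j - γbar j) * Sigf j k * (γhat k - γbar k))
          + Bf3 * lam0 * (∑ j, |γhat j - γbar j|) ^ 2 := by
      linarith [habs3.2, hdom]
    have s2 : σ * (∑ j, ∑ k, (γhat j - γbar j) * Sigf j k * (γhat k - γbar k))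
        ≤ σ * ((∑ j, ∑ k, (γhat j - γbar j) * SigTf j k * (γhat k - γbar k))
          + Bf1 * lam0 * (∑ j, |γhat j - γbar j|) ^ 2) :=
      mul_le_mul_of_nonneg_left (by linarith [habs1.1]) hσ
    have s3 : lam0 * (∑ j, |γhat j - γbar j|) ^ 2 ≤ M0 ^ 2 * ϱ0 * (sγ * lam0 ^ 2) := by
      linarith only [mul_le_mul_of_nonneg_left hL1sq hlam0.le,
        mul_le_mul_of_nonneg_right hrate0
          (by positivity : (0:ℝ) ≤ M0 ^ 2 * (sγ * lam0 ^ 2))]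
    have s4 : σ * (∑ j, ∑ k, (γhat j - γbar j) * SigTf j k * (γhat k - γbar k))
        ≤ σ * (M0 * sγ * lam0 ^ 2) := mul_le_mul_of_nonneg_left haquad hσ
    linarith only [s1, s2, s4, mul_le_mul_of_nonneg_left s3 (mul_nonneg hσ hBf1),
      mul_le_mul_of_nonneg_left s3 hBf3]
  -- bounds on the regression functions
  have hm11barb : ∀ i, |m11bar i| ≤ tCh1 := by
    intro i
    rw [hm11bar i]
    have hmono : Monotone ψY := by
      apply monotone_of_deriv_nonneg (fun x => (hψYd x).differentiableAt)
      intro x; rw [(hψYd x).deriv]; exact hψY'nn x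
    have hx := abs_le.mp (hhlb i)
    rw [← htCh1]
    exact aux_abs_le_max (hmono hx.1) (hmono hx.2)
  have hm1hatb : ∀ i, |m1hat i| ≤ 1 := by
    intro i; rw [hm1hat i]
    exact abs_le.mpr ⟨by linarith [(hψDrange (∑ j, α1hat j * gV i j)).1],
      (hψDrange (∑ j, α1hat j * gV i j)).2⟩
  have hvdiff : ∀ i, (∑ j, α1hat j * gV i j) - (∑ j, α1bar j * gV i j)
      = ∑ j, (α1hat j - α1bar j) * gV i j := by
    intro i; rw [← Finset.sum_sub_distrib]
    exact Finset.sum_congr rfl fun j _ => by ring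
  have hwdiff : ∀ i, (∑ j, α11hat j * hV i j) - (∑ j, α11bar j * hV i j)
      = ∑ j, (α11hat j - α11bar j) * hV i j := by
    intro i; rw [← Finset.sum_sub_distrib]
    exact Finset.sum_congr rfl fun j _ => by ring
  have hm1diff : ∀ i, |m1hat i - m1bar i|
      ≤ cD' * |∑ j, (α1hat j - α1bar j) * gV i j| := by
    intro i
    rw [hm1hat i, hm1bar i]
    have hb1 : |∑ j, α1bar j * gV i j| ≤ Cg1 + Cg0 * r1 :=
      le_trans (hglb i) (by linarith only [mul_pos hCg0' hr1pos])
    have ha1 : |∑ j, α1hat j * gV i j| ≤ Cg1 + Cg0 * r1 := by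
      have he : ∑ j, α1hat j * gV i j
          = (∑ j, α1bar j * gV i j) + ∑ j, (α1hat j - α1bar j) * gV i j := by
        rw [← hvdiff i]; ring
      rw [he]
      refine (abs_add_le _ _).trans ?_
      have h1 := hvb i; have h2 := hglb i; linarith
    have hL : ∀ x : ℝ, |x| ≤ Cg1 + Cg0 * r1 → ‖ψD' x‖ ≤ cD' := by
      intro x hx
      rw [Real.norm_eq_abs, abs_of_nonneg (hψD'nn x)]
      calc ψD' x ≤ ψD' 0 * Real.exp (Cg2 * |x - 0|) := hψDratio x 0
        _ ≤ dD0 * Real.exp (Cg2 * (Cg1 + Cg0 * r1)) := by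
            rw [hdD0, sub_zero]
            exact mul_le_mul_of_nonneg_left
              (Real.exp_le_exp.mpr (mul_le_mul_of_nonneg_left hx hCg2.le)) hdD0nn
        _ = cD' := hcD'def.symm
    calc |ψD (∑ j, α1hat j * gV i j) - ψD (∑ j, α1bar j * gV i j)|
        ≤ cD' * |(∑ j, α1hat j * gV i j) - (∑ j, α1bar j * gV i j)| :=
          aux_lip ψD ψD' hψDd (Cg1 + Cg0 * r1) cD' _ _ hL ha1 hb1
      _ = cD' * |∑ j, (α1hat j - α1bar j) * gV i j| := by rw [hvdiff i]
  have hm11diff : ∀ i, |m11hat i - m11bar i|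
      ≤ cY' * |∑ j, (α11hat j - α11bar j) * hV i j| := by
    intro i
    rw [hm11hat i, hm11bar i]
    have hb1 : |∑ j, α11bar j * hV i j| ≤ Ch1 + Ch0 * r2 :=
      le_trans (hhlb i) (by linarith only [mul_pos hCh0' hr2pos])
    have ha1 : |∑ j, α11hat j * hV i j| ≤ Ch1 + Ch0 * r2 := by
      have he : ∑ j, α11hat j * hV i j
          = (∑ j, α11bar j * hV i j) + ∑ j, (α11hat j - α11bar j) * hV i j := by
        rw [← hwdiff i]; ring
      rw [he]
      refine (abs_add_le _ _).trans ?_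
      have h1 := hwvb i; have h2 := hhlb i; linarith
    have hL : ∀ x : ℝ, |x| ≤ Ch1 + Ch0 * r2 → ‖ψY' x‖ ≤ cY' := by
      intro x hx
      rw [Real.norm_eq_abs, abs_of_nonneg (hψY'nn x)]
      calc ψY' x ≤ ψY' 0 * Real.exp (Ch2 * |x - 0|) := hψYratio x 0
        _ ≤ dY0 * Real.exp (Ch2 * (Ch1 + Ch0 * r2)) := by
            rw [hdY0, sub_zero]
            exact mul_le_mul_of_nonneg_left
              (Real.exp_le_exp.mpr (mul_le_mul_of_nonneg_left hx hCh2.le)) hdY0nn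
        _ = cY' := hcY'def.symm
    calc |ψY (∑ j, α11hat j * hV i j) - ψY (∑ j, α11bar j * hV i j)|
        ≤ cY' * |(∑ j, α11hat j * hV i j) - (∑ j, α11bar j * hV i j)| :=
          aux_lip ψY ψY' hψYd (Ch1 + Ch0 * r2) cY' _ _ hL ha1 hb1
      _ = cY' * |∑ j, (α11hat j - α11bar j) * hV i j| := by rw [hwdiff i]
  have hΔm : ∀ i, |m1hat i * m11hat i - m1bar i * m11bar i|
      ≤ cY' * |∑ j, (α11hat j - α11bar j) * hV i j|
        + cD' * |∑ j, (α1hat j - α1bar j) * gV i j| * tCh1 := by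
    intro i
    have he : m1hat i * m11hat i - m1bar i * m11bar i
        = m1hat i * (m11hat i - m11bar i) + (m1hat i - m1bar i) * m11bar i := by ring
    rw [he]
    refine (abs_add_le _ _).trans ?_
    rw [abs_mul, abs_mul]
    have h1 : |m1hat i| * |m11hat i - m11bar i|
        ≤ 1 * (cY' * |∑ j, (α11hat j - α11bar j) * hV i j|) :=
      mul_le_mul (hm1hatb i) (hm11diff i) (abs_nonneg _) zero_le_one
    have h2 : |m1hat i - m1bar i| * |m11bar i|
        ≤ (cD' * |∑ j, (α1hat j - α1bar j) * gV i j|) * tCh1 :=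
      mul_le_mul (hm1diff i) (hm11barb i) (abs_nonneg _)
        (mul_nonneg hcD'nn (abs_nonneg _))
    linarith
  -- Term 1 bound
  have hbT1 : |(1 / (n:ℝ)) * ∑ i, Z i * wbar i * (-(∑ j, (γhat j - γbar j) * fV i j)) * (D i * Y i - m1bar i * m11bar i)|
      ≤ (B1 * M0) * (sγ * lam0 * lam2) := by
    have heq : (1 / (n:ℝ)) * ∑ i, Z i * wbar i * (-(∑ j, (γhat j - γbar j) * fV i j)) * (D i * Y i - m1bar i * m11bar i)
        = -((1 / (n:ℝ)) * ∑ i, (Z i * wbar i * (D i * Y i - m1bar i * m11bar i)) * (∑ j, (γhat j - γbar j) * fV i j)) := by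
      rw [← mul_neg, ← Finset.sum_neg_distrib]
      congr 1
      apply Finset.sum_congr rfl
      intro i _
      ring
    rw [heq, abs_neg,
      aux_swap n (p+1) (fun i => Z i * wbar i * (D i * Y i - m1bar i * m11bar i))
        (fun j => γhat j - γbar j) fV (1/(n:ℝ))]
    have hTj : ∀ j, |(1/(n:ℝ)) * ∑ i, (Z i * wbar i * (D i * Y i - m1bar i * m11bar i)) * fV i j| ≤ B1 * lam2 := by
      intro j
      have he2 : (1/(n:ℝ)) * ∑ i, (Z i * wbar i * (D i * Y i - m1bar i * m11bar i)) * fV i j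
          = (1/(n:ℝ)) * ∑ i, Z i * wbar i * (D i * Y i - m1bar i * m11bar i) * hV i (ι j) := by
        congr 1
        apply Finset.sum_congr rfl
        intro i _
        rw [hsub i j]
      rw [he2]
      exact hd (ι j)
    calc |∑ j, (γhat j - γbar j) * ((1/(n:ℝ)) * ∑ i, (Z i * wbar i * (D i * Y i - m1bar i * m11bar i)) * fV i j)|
        ≤ ∑ j, |(γhat j - γbar j) * ((1/(n:ℝ)) * ∑ i, (Z i * wbar i * (D i * Y i - m1bar i * m11bar i)) * fV i j)| :=
          Finset.abs_sum_le_sum_abs _ _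
      _ ≤ ∑ j, |γhat j - γbar j| * (B1 * lam2) := by
          apply Finset.sum_le_sum
          intro j _
          rw [abs_mul]
          exact mul_le_mul_of_nonneg_left (hTj j) (abs_nonneg _)
      _ = (∑ j, |γhat j - γbar j|) * (B1 * lam2) := (Finset.sum_mul _ _ _).symm
      _ ≤ (M0 * sγ * lam0) * (B1 * lam2) :=
          mul_le_mul_of_nonneg_right haL1 (mul_nonneg hB1 hl2.le)
      _ = (B1 * M0) * (sγ * lam0 * lam2) := by ring
  -- Term 2 bound
  have hbT2 : |(1 / (n:ℝ)) * ∑ i, Z i * wbar i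
        * (Real.exp (-(∑ j, (γhat j - γbar j) * fV i j)) - 1 - (-(∑ j, (γhat j - γbar j) * fV i j))) * (D i * Y i - m1bar i * m11bar i)|
      ≤ A2c * (sγ * lam0 * lam2) := by
    have hpt2 : ∀ i, |Z i * wbar i * (Real.exp (-(∑ j, (γhat j - γbar j) * fV i j)) - 1 - (-(∑ j, (γhat j - γbar j) * fV i j))) * (D i * Y i - m1bar i * m11bar i)|
        ≤ (Z i * wbar i * |D i * Y i - m1bar i * m11bar i|) * (∑ j, (γhat j - γbar j) * fV i j) ^ 2 * EE := by
      intro i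
      rw [abs_mul, abs_mul, abs_of_nonneg (hZw i)]
      have h1 : |Real.exp (-(∑ j, (γhat j - γbar j) * fV i j)) - 1 - (-(∑ j, (γhat j - γbar j) * fV i j))| ≤ (∑ j, (γhat j - γbar j) * fV i j) ^ 2 * EE := by
        refine (aux_abs_exp_taylor (-(∑ j, (γhat j - γbar j) * fV i j))).trans ?_
        rw [neg_sq, abs_neg]
        exact mul_le_mul_of_nonneg_left (Real.exp_le_exp.mpr (hub i)) (sq_nonneg _)
      calc Z i * wbar i * |Real.exp (-(∑ j, (γhat j - γbar j) * fV i j)) - 1 - (-(∑ j, (γhat j - γbar j) * fV i j))| * |(D i * Y i - m1bar i * m11bar i)|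
          ≤ (Z i * wbar i * ((∑ j, (γhat j - γbar j) * fV i j) ^ 2 * EE)) * |(D i * Y i - m1bar i * m11bar i)| :=
            mul_le_mul_of_nonneg_right
              (mul_le_mul_of_nonneg_left h1 (hZw i)) (abs_nonneg _)
        _ = (Z i * wbar i * |D i * Y i - m1bar i * m11bar i|) * (∑ j, (γhat j - γbar j) * fV i j) ^ 2 * EE := by ring
    have hWnn : 0 ≤ σ * M0 + (σ * Bf1 + Bf3) * M0 ^ 2 * ϱ0 := by
      have h1 : 0 ≤ σ * M0 := mul_nonneg hσ hM0.le
      have h2 : 0 ≤ (σ * Bf1 + Bf3) * M0 ^ 2 * ϱ0 :=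
        mul_nonneg (mul_nonneg (add_nonneg (mul_nonneg hσ hBf1) hBf3) (sq_nonneg _)) hϱ0.le
      linarith
    calc |(1 / (n:ℝ)) * ∑ i, Z i * wbar i * (Real.exp (-(∑ j, (γhat j - γbar j) * fV i j)) - 1 - (-(∑ j, (γhat j - γbar j) * fV i j))) * (D i * Y i - m1bar i * m11bar i)|
        = (1 / (n:ℝ)) * |∑ i, Z i * wbar i * (Real.exp (-(∑ j, (γhat j - γbar j) * fV i j)) - 1 - (-(∑ j, (γhat j - γbar j) * fV i j))) * (D i * Y i - m1bar i * m11bar i)| := by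
          rw [abs_mul, abs_of_nonneg hNinn]
      _ ≤ (1 / (n:ℝ)) * ∑ i, |Z i * wbar i * (Real.exp (-(∑ j, (γhat j - γbar j) * fV i j)) - 1 - (-(∑ j, (γhat j - γbar j) * fV i j))) * (D i * Y i - m1bar i * m11bar i)| :=
          mul_le_mul_of_nonneg_left (Finset.abs_sum_le_sum_abs _ _) hNinn
      _ ≤ (1 / (n:ℝ)) * ∑ i, (Z i * wbar i * |D i * Y i - m1bar i * m11bar i|) * (∑ j, (γhat j - γbar j) * fV i j) ^ 2 * EE :=
          mul_le_mul_of_nonneg_left (Finset.sum_le_sum fun i _ => hpt2 i) hNinn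
      _ = ((1 / (n:ℝ)) * ∑ i, (Z i * wbar i * |D i * Y i - m1bar i * m11bar i|) * (∑ j, (γhat j - γbar j) * fV i j) ^ 2) * EE := by
          rw [← Finset.sum_mul]; ring
      _ = (∑ j, ∑ k, (γhat j - γbar j) * SigTf3 j k * (γhat k - γbar k)) * EE := by
          rw [hQuad3]
      _ ≤ ((σ * M0 + (σ * Bf1 + Bf3) * M0 ^ 2 * ϱ0) * (sγ * lam0 ^ 2)) * EE :=
          mul_le_mul_of_nonneg_right hQ3bound hEEpos.le
      _ ≤ A2c * (sγ * lam0 * lam2) := by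
          rw [hA2cdef]
          have hll : lam0 ^ 2 ≤ lam0 * lam2 := by
            rw [sq]
            exact mul_le_mul_of_nonneg_left (hlam01.trans hlam12) hlam0.le
          linarith only [mul_le_mul_of_nonneg_left hll
            (mul_nonneg (mul_nonneg hEEpos.le hWnn) hsγ0.le)]
  -- Term 3 bound
  have hbT3 : |(1 / (n:ℝ)) * ∑ i, (-(Z i * wbar i * (Real.exp (-(∑ j, (γhat j - γbar j) * fV i j)) - 1))) * (m1hat i * m11hat i - m1bar i * m11bar i)|
      ≤ A3c * (sγ * lam0 * lam2) + B3c * (sα * lam1 * lam2) + C3c * (s11 * lam2 ^ 2) := by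
    have hpt3 : ∀ i, |(-(Z i * wbar i * (Real.exp (-(∑ j, (γhat j - γbar j) * fV i j)) - 1))) * (m1hat i * m11hat i - m1bar i * m11bar i)|
        ≤ (EE * cY' / 2 + EE * (cD' * tCh1) / 2) * (Z i * wbar i * (∑ j, (γhat j - γbar j) * fV i j) ^ 2)
          + EE * cY' / 2 * (Z i * wbar i * (∑ j, (α11hat j - α11bar j) * hV i j) ^ 2)
          + EE * (cD' * tCh1) / 2 * (Z i * wbar i * (∑ j, (α1hat j - α1bar j) * gV i j) ^ 2) := by
      intro i
      rw [abs_mul, abs_neg, abs_mul, abs_of_nonneg (hZw i)]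
      have hX : |Real.exp (-(∑ j, (γhat j - γbar j) * fV i j)) - 1| ≤ |(∑ j, (γhat j - γbar j) * fV i j)| * EE := by
        refine (aux_abs_exp_sub_one _).trans ?_
        rw [abs_neg]
        exact mul_le_mul (le_of_eq rfl) (Real.exp_le_exp.mpr (hub i))
          (Real.exp_pos _).le (abs_nonneg _)
      have hstep : Z i * wbar i * |Real.exp (-(∑ j, (γhat j - γbar j) * fV i j)) - 1| * |(m1hat i * m11hat i - m1bar i * m11bar i)|
          ≤ (Z i * wbar i * (|(∑ j, (γhat j - γbar j) * fV i j)| * EE)) * (cY' * |(∑ j, (α11hat j - α11bar j) * hV i j)| + cD' * |(∑ j, (α1hat j - α1bar j) * gV i j)| * tCh1) :=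
        mul_le_mul (mul_le_mul_of_nonneg_left hX (hZw i)) (hΔm i) (abs_nonneg _)
          (mul_nonneg (hZw i) (mul_nonneg (abs_nonneg _) hEEpos.le))
      refine hstep.trans ?_
      have huw : |(∑ j, (γhat j - γbar j) * fV i j)| * |(∑ j, (α11hat j - α11bar j) * hV i j)| ≤ ((∑ j, (γhat j - γbar j) * fV i j) ^ 2 + (∑ j, (α11hat j - α11bar j) * hV i j) ^ 2) / 2 := by
        linarith only [sq_nonneg (|(∑ j, (γhat j - γbar j) * fV i j)| - |(∑ j, (α11hat j - α11bar j) * hV i j)|), sq_abs (∑ j, (γhat j - γbar j) * fV i j), sq_abs (∑ j, (α11hat j - α11bar j) * hV i j)]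
      have huv : |(∑ j, (γhat j - γbar j) * fV i j)| * |(∑ j, (α1hat j - α1bar j) * gV i j)| ≤ ((∑ j, (γhat j - γbar j) * fV i j) ^ 2 + (∑ j, (α1hat j - α1bar j) * gV i j) ^ 2) / 2 := by
        linarith only [sq_nonneg (|(∑ j, (γhat j - γbar j) * fV i j)| - |(∑ j, (α1hat j - α1bar j) * gV i j)|), sq_abs (∑ j, (γhat j - γbar j) * fV i j), sq_abs (∑ j, (α1hat j - α1bar j) * gV i j)]
      have c1nn : 0 ≤ EE * cY' * (Z i * wbar i) :=
        mul_nonneg (mul_nonneg hEEpos.le hcY'nn) (hZw i)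
      have c2nn : 0 ≤ EE * (cD' * tCh1) * (Z i * wbar i) :=
        mul_nonneg (mul_nonneg hEEpos.le (mul_nonneg hcD'nn htCnn)) (hZw i)
      linarith only [mul_le_mul_of_nonneg_left huw c1nn, mul_le_mul_of_nonneg_left huv c2nn]
    calc |(1 / (n:ℝ)) * ∑ i, (-(Z i * wbar i * (Real.exp (-(∑ j, (γhat j - γbar j) * fV i j)) - 1))) * (m1hat i * m11hat i - m1bar i * m11bar i)|
        = (1 / (n:ℝ)) * |∑ i, (-(Z i * wbar i * (Real.exp (-(∑ j, (γhat j - γbar j) * fV i j)) - 1))) * (m1hat i * m11hat i - m1bar i * m11bar i)| := by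
          rw [abs_mul, abs_of_nonneg hNinn]
      _ ≤ (1 / (n:ℝ)) * ∑ i, |(-(Z i * wbar i * (Real.exp (-(∑ j, (γhat j - γbar j) * fV i j)) - 1))) * (m1hat i * m11hat i - m1bar i * m11bar i)| :=
          mul_le_mul_of_nonneg_left (Finset.abs_sum_le_sum_abs _ _) hNinn
      _ ≤ (1 / (n:ℝ)) * ∑ i, ((EE * cY' / 2 + EE * (cD' * tCh1) / 2) * (Z i * wbar i * (∑ j, (γhat j - γbar j) * fV i j) ^ 2)
          + EE * cY' / 2 * (Z i * wbar i * (∑ j, (α11hat j - α11bar j) * hV i j) ^ 2)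
          + EE * (cD' * tCh1) / 2 * (Z i * wbar i * (∑ j, (α1hat j - α1bar j) * gV i j) ^ 2)) :=
          mul_le_mul_of_nonneg_left (Finset.sum_le_sum fun i _ => hpt3 i) hNinn
      _ = (EE * cY' / 2 + EE * (cD' * tCh1) / 2)
            * ((1 / (n:ℝ)) * ∑ i, Z i * wbar i * (∑ j, (γhat j - γbar j) * fV i j) ^ 2)
          + EE * cY' / 2 * ((1 / (n:ℝ)) * ∑ i, Z i * wbar i * (∑ j, (α11hat j - α11bar j) * hV i j) ^ 2)
          + EE * (cD' * tCh1) / 2 * ((1 / (n:ℝ)) * ∑ i, Z i * wbar i * (∑ j, (α1hat j - α1bar j) * gV i j) ^ 2) := by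
          rw [Finset.sum_add_distrib, Finset.sum_add_distrib,
            ← Finset.mul_sum, ← Finset.mul_sum, ← Finset.mul_sum]
          ring
      _ ≤ (EE * cY' / 2 + EE * (cD' * tCh1) / 2) * (M0 * sγ * lam0 ^ 2)
          + EE * cY' / 2 * (M2 * (sγ * lam0 ^ 2 + sα * lam1 ^ 2 + s11 * lam2 ^ 2))
          + EE * (cD' * tCh1) / 2 * (M1 * (sγ * lam0 ^ 2 + sα * lam1 ^ 2)) := by
          have e1 : (1 / (n:ℝ)) * ∑ i, Z i * wbar i * (∑ j, (γhat j - γbar j) * fV i j) ^ 2 ≤ M0 * sγ * lam0 ^ 2 := by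
            rw [hQuadU]; exact haquad
          have k1nn : 0 ≤ EE * cY' / 2 + EE * (cD' * tCh1) / 2 := by
            have := mul_nonneg hEEpos.le hcY'nn
            have := mul_nonneg hEEpos.le (mul_nonneg hcD'nn htCnn)
            linarith
          have k2nn : 0 ≤ EE * cY' / 2 := by
            have := mul_nonneg hEEpos.le hcY'nn; linarith
          have k3nn : 0 ≤ EE * (cD' * tCh1) / 2 := by
            have := mul_nonneg hEEpos.le (mul_nonneg hcD'nn htCnn); linarith
          exact add_le_add (add_le_add
            (mul_le_mul_of_nonneg_left e1 k1nn)
            (mul_le_mul_of_nonneg_left hcquad k2nn))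
            (mul_le_mul_of_nonneg_left hbquad k3nn)
      _ ≤ A3c * (sγ * lam0 * lam2) + B3c * (sα * lam1 * lam2) + C3c * (s11 * lam2 ^ 2) := by
          have hcc : cD' * tCh1 ≤ cD * |tCh1| :=
            mul_le_mul hcD'le (le_abs_self _) htCnn hcDnn
          have hX0 : sγ * lam0 ^ 2 ≤ sγ * lam0 * lam2 := by
            linarith only [mul_le_mul_of_nonneg_left (hlam01.trans hlam12)
              (mul_nonneg hsγ0.le hlam0.le)]
          have hX1 : sα * lam1 ^ 2 ≤ sα * lam1 * lam2 := by
            linarith only [mul_le_mul_of_nonneg_left hlam12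
              (mul_nonneg hsα0.le hl1.le)]
          have hX0nn : (0:ℝ) ≤ sγ * lam0 ^ 2 := by positivity
          have hX1nn : (0:ℝ) ≤ sα * lam1 ^ 2 := by positivity
          have hcoefA : (EE * cY' / 2 + EE * (cD' * tCh1) / 2) * M0
              + EE * cY' / 2 * M2 + EE * (cD' * tCh1) / 2 * M1 ≤ A3c := by
            rw [hA3cdef]
            have h1 := mul_le_mul_of_nonneg_right hcY'le (by linarith : (0:ℝ) ≤ M0 + M2)
            have h2 := mul_le_mul_of_nonneg_right hcc (by linarith : (0:ℝ) ≤ M0 + M1)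
            linarith only [mul_le_mul_of_nonneg_left (add_le_add h1 h2) hEEpos.le]
          have hcoefB : EE * cY' / 2 * M2 + EE * (cD' * tCh1) / 2 * M1 ≤ B3c := by
            rw [hB3cdef]
            have h1 := mul_le_mul_of_nonneg_right hcY'le hM2.le
            have h2 := mul_le_mul_of_nonneg_right hcc hM1.le
            linarith only [mul_le_mul_of_nonneg_left (add_le_add h1 h2) hEEpos.le]
          have hcoefC : EE * cY' / 2 * M2 ≤ C3c := by
            rw [hC3cdef]
            have h1 := mul_le_mul_of_nonneg_right hcY'le hM2.le
            linarith only [mul_le_mul_of_nonneg_left h1 hEEpos.le]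
          have t1 := mul_le_mul hcoefA hX0 hX0nn (by linarith [hA3cnn] : (0:ℝ) ≤ A3c)
          have t2 := mul_le_mul hcoefB hX1 hX1nn (by linarith [hB3cnn] : (0:ℝ) ≤ B3c)
          have t3 := mul_le_mul_of_nonneg_right hcoefC (by positivity : (0:ℝ) ≤ s11 * lam2 ^ 2)
          linarith only [t1, t2, t3]
  -- Term 4 bound
  have hbT4 : |(1 / (n:ℝ)) * ∑ i, (1 - Z i / πbar i) * m11bar i * (m1hat i - m1bar i)|
      ≤ Kf * M1 * (sγ * lam0 * lam2) + Kf * M1 * (sα * lam1 * lam2) := by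
    have he : (1 / (n:ℝ)) * ∑ i, (1 - Z i / πbar i) * m11bar i * (m1hat i - m1bar i)
        = (1 / (n:ℝ)) * ∑ i, (1 - Z i / πbar i) * m11bar i
          * (ψD (∑ j, α1hat j * gV i j) - ψD (∑ j, α1bar j * gV i j)) := by
      congr 1
      apply Finset.sum_congr rfl
      intro i _
      rw [hm1hat i, hm1bar i]
    rw [he]
    refine (hf α1hat hbL1).trans ?_
    have hKle : 4 * (Real.exp (-Cf1) + 1) * Cg0 * tCh1 * dD0
        * Real.exp (Cg2 * (Cg1 + Cg0 * r1)) ≤ Kf := by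
      rw [hKfdef]
      have h1 : tCh1 * cD' ≤ |tCh1| * cD :=
        mul_le_mul (le_abs_self _) hcD'le hcD'nn (abs_nonneg _)
      have hb4 : (0:ℝ) ≤ 4 * (Real.exp (-Cf1) + 1) * Cg0 := mul_nonneg hbase hCg0'.le
      calc 4 * (Real.exp (-Cf1) + 1) * Cg0 * tCh1 * dD0 * Real.exp (Cg2 * (Cg1 + Cg0 * r1))
          = (4 * (Real.exp (-Cf1) + 1) * Cg0) * (tCh1 * cD') := by rw [hcD'def]; ring
        _ ≤ (4 * (Real.exp (-Cf1) + 1) * Cg0) * (|tCh1| * cD) :=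
            mul_le_mul_of_nonneg_left h1 hb4
        _ = 4 * (Real.exp (-Cf1) + 1) * Cg0 * |tCh1| * cD := by ring
    have step : 4 * (Real.exp (-Cf1) + 1) * Cg0 * tCh1 * dD0
        * Real.exp (Cg2 * (Cg1 + Cg0 * r1)) * r1 * lam1 ≤ Kf * r1 * lam1 :=
      mul_le_mul_of_nonneg_right (mul_le_mul_of_nonneg_right hKle hr1pos.le) hl1.le
    refine step.trans ?_
    rw [hr1]
    linarith only [mul_le_mul_of_nonneg_left hlam12
        (mul_nonneg (mul_nonneg hKfnn hM1.le) (mul_nonneg hsγ0.le hlam0.le)),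
      mul_le_mul_of_nonneg_left hlam12
        (mul_nonneg (mul_nonneg hKfnn hM1.le) (mul_nonneg hsα0.le hl1.le))]
  -- Term 5 bound
  have hbT5 : |(1 / (n:ℝ)) * ∑ i, (1 - Z i / πbar i) * m1hat i * (m11hat i - m11bar i)|
      ≤ Kg * M2 * (sγ * lam0 * lam2) + Kg * M2 * (sα * lam1 * lam2)
        + Kg * M2 * (s11 * lam2 ^ 2) := by
    have he : (1 / (n:ℝ)) * ∑ i, (1 - Z i / πbar i) * m1hat i * (m11hat i - m11bar i)
        = (1 / (n:ℝ)) * ∑ i, (1 - Z i / πbar i) * ψD (∑ j, α1hat j * gV i j)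
          * (ψY (∑ j, α11hat j * hV i j) - ψY (∑ j, α11bar j * hV i j)) := by
      congr 1
      apply Finset.sum_congr rfl
      intro i _
      rw [hm1hat i, hm11hat i, hm11bar i]
    rw [he]
    refine (hg α1hat α11hat hcL1).trans ?_
    have hKle : 4 * (Real.exp (-Cf1) + 1) * Ch0 * dY0
        * Real.exp (Ch2 * (Ch1 + Ch0 * r2)) ≤ Kg := by
      rw [hKgdef]
      have hb4 : (0:ℝ) ≤ 4 * (Real.exp (-Cf1) + 1) * Ch0 := mul_nonneg hbase hCh0'.le
      calc 4 * (Real.exp (-Cf1) + 1) * Ch0 * dY0 * Real.exp (Ch2 * (Ch1 + Ch0 * r2))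
          = (4 * (Real.exp (-Cf1) + 1) * Ch0) * cY' := by rw [hcY'def]; ring
        _ ≤ (4 * (Real.exp (-Cf1) + 1) * Ch0) * cY := mul_le_mul_of_nonneg_left hcY'le hb4
        _ = 4 * (Real.exp (-Cf1) + 1) * Ch0 * cY := by ring
    have step : 4 * (Real.exp (-Cf1) + 1) * Ch0 * dY0
        * Real.exp (Ch2 * (Ch1 + Ch0 * r2)) * r2 * lam2 ≤ Kg * r2 * lam2 :=
      mul_le_mul_of_nonneg_right (mul_le_mul_of_nonneg_right hKle hr2pos.le) hl2.le
    refine step.trans ?_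
    rw [hr2]
    exact le_of_eq (by ring)
  -- assemble
  rw [hsplit]
  refine (aux_abs_add5 _ _ _ _ _).trans ?_
  linarith only [hbT1, hbT2, hbT3, hbT4, hbT5, hP.le, hQ.le, hRr.le]
end
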